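/- arXiv:2004.05944 — 6 statements merged into one kernel-verified Lean document; each statement's English description precedes it below -/
import Mathlib

section
/- Let a > b > 0 with √a - √b > √2 and let β* be the smaller root of g(β) = 0 where g(β) = (b·e^{2β} + a·e^{-2β})/2 - (a+b)/2 + 1. Define g̃(β) = g(β) for β < (1/4)·log(a/b) and g̃(β) = √(ab) - (a+b)/2 + 1 otherwise. Then g̃(β) < 0 for all β > β*. -/
/-!
Writing `L = log (a / b)`, one has `b e^{2β} + a e^{-2β} = 2 √(ab) cosh (2β - L/2)`, so
`g β = √(ab) cosh (2β - L/2) - (a + b)/2 + 1`. Past `β₀ = L/4` the function `g̃` is the minimum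
`√(ab) - (a + b)/2 + 1 = 1 - (√a - √b)²/2` of `g`, which is negative by the separation
hypothesis. Before `β₀`, `g` is strictly decreasing since `cosh` is, hence negative right of
its zero `β*`.
-/

open Real

theorem mul_exp_add_mul_exp_neg_eq_cosh {a b : ℝ} (ha : 0 < a) (hb : 0 < b) (x : ℝ) :
    b * exp x + a * exp (-x) = 2 * √(a * b) * cosh (x - log (a / b) / 2) := by
  have hL : exp (log (a / b) / 2) = √a / √b := by
    rw [exp_half, exp_log (div_pos ha hb), sqrt_div' _ hb.le]
  have hsa := sqrt_pos.2 ha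
  have hsb := sqrt_pos.2 hb
  rw [cosh_eq, neg_sub, exp_sub, exp_sub, hL, sqrt_mul ha.le, exp_neg]
  field_simp
  rw [sq_sqrt ha.le, sq_sqrt hb.le]
  ring

theorem sub_sqrt_sq {a b : ℝ} (ha : 0 ≤ a) (hb : 0 ≤ b) :
    (√a - √b) ^ 2 = a + b - 2 * √(a * b) := by
  rw [sub_sq, sq_sqrt ha, sq_sqrt hb, sqrt_mul ha]
  ring

theorem sqrt_mul_sub_add_one_neg {a b : ℝ} (ha : 0 ≤ a) (hb : 0 ≤ b) (hsep : √2 < √a - √b) :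
    √(a * b) - (a + b) / 2 + 1 < 0 := by
  have h2 : (√2) ^ 2 < (√a - √b) ^ 2 := pow_lt_pow_left₀ hsep (sqrt_nonneg 2) two_ne_zero
  rw [sq_sqrt zero_le_two, sub_sqrt_sq ha hb] at h2
  linarith

theorem stmt4_general (a b : ℝ) (hb : 0 < b) (hab : b < a)
    (hsep : Real.sqrt 2 < Real.sqrt a - Real.sqrt b)
    (g : ℝ → ℝ)
    (hg : ∀ β, g β = (b * Real.exp (2 * β) + a * Real.exp (-2 * β)) / 2
      - (a + b) / 2 + 1)
    (βstar : ℝ) (hroot : g βstar = 0) :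
    let gt : ℝ → ℝ := fun β => if β < (1 / 4) * Real.log (a / b) then g β
      else Real.sqrt (a * b) - (a + b) / 2 + 1
    ∀ β : ℝ, βstar < β → gt β < 0 := by
  intro gt β hβ
  have ha : 0 < a := hb.trans hab
  have hg_cosh : ∀ β, g β = √(a * b) * cosh (2 * β - log (a / b) / 2) - (a + b) / 2 + 1 := by
    intro β
    rw [hg, neg_mul, mul_exp_add_mul_exp_neg_eq_cosh ha hb]
    ring
  show (if β < 1 / 4 * log (a / b) then g β else √(a * b) - (a + b) / 2 + 1) < 0
  split_ifs with hβ₀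
  · have hcosh : cosh (2 * β - log (a / b) / 2) < cosh (2 * βstar - log (a / b) / 2) := by
      rw [cosh_lt_cosh, abs_of_neg (by linarith), abs_of_neg (by linarith)]
      linarith
    have hmono := mul_lt_mul_of_pos_left hcosh (sqrt_pos.2 (mul_pos ha hb))
    rw [hg_cosh] at hroot ⊢
    linarith
  · exact sqrt_mul_sub_add_one_neg ha.le hb.le hsep

/-- If `β*` is the smaller root of `g β = 0`, then `g̃ β < 0`
for all `β > β*`. -/
theorem stmt4 (a b : ℝ) (hb : 0 < b) (hab : b < a)
    (hsep : Real.sqrt 2 < Real.sqrt a - Real.sqrt b)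
    (g : ℝ → ℝ)
    (hg : ∀ β, g β = (b * Real.exp (2 * β) + a * Real.exp (-2 * β)) / 2
      - (a + b) / 2 + 1)
    (βstar : ℝ) (hroot : g βstar = 0) (hsmall : ∀ β, g β = 0 → βstar ≤ β) :
    let gt : ℝ → ℝ := fun β => if β < (1 / 4) * Real.log (a / b) then g β
      else Real.sqrt (a * b) - (a + b) / 2 + 1
    ∀ β : ℝ, βstar < β → gt β < 0 :=
  stmt4_general a b hb hab hsep g hg βstar hroot
end

section
/- Let a > b > 0 and β > 0. Define f_β(t) = √(t² + ab) - t·(log(√(t² + ab) + t) - log(b)) - (a+b)/2 + 1 + 2βt. Then f_β attains its global maximum at t* = (b·e^{2β} - a·e^{-2β})/2, and f_β(t*) = (b·e^{2β} + a·e^{-2β})/2 - (a+b)/2 + 1. -/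
/-!
Write `c = ab` and `s = √(t² + c) + t > 0`. Since `(√(t² + c) - t) s = c`, we have
`√(t² + c) = (s + c/s)/2` and `t = (s - c/s)/2`. Putting
`p = b e^{2β}` and `s = p e^u`, the function becomes
`(p e^u (1 - u) + (c/p) e^{-u} (1 + u))/2 - (a+b)/2 + 1`, and both `e^u (1 - u)` and
`e^{-u} (1 + u)` are at most `1`, with equality at `u = 0`, i.e. at `t = (p - c/p)/2`.
-/

open Real

section

variable {c p : ℝ}

lemma sqrt_sq_add_add_pos (hc : 0 < c) (t : ℝ) : 0 < √(t ^ 2 + c) + t := by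
  have habs : |t| < √(t ^ 2 + c) :=
    (Real.lt_sqrt (abs_nonneg t)).2 (by rw [sq_abs]; linarith)
  linarith [neg_abs_le t]

lemma sqrt_sq_add_sub_mul_sqrt_sq_add_add (hc : 0 ≤ c) (t : ℝ) :
    (√(t ^ 2 + c) - t) * (√(t ^ 2 + c) + t) = c := by
  have hsq : √(t ^ 2 + c) ^ 2 = t ^ 2 + c := Real.sq_sqrt (by positivity)
  linear_combination hsq

lemma sqrt_sq_add_sub_mul_log_le (hc : 0 < c) (hp : 0 < p) (t : ℝ) :
    √(t ^ 2 + c) - t * (log (√(t ^ 2 + c) + t) - log p) ≤ (p + c / p) / 2 := by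
  set r := √(t ^ 2 + c)
  set u := log (r + t) - log p
  have hs : 0 < r + t := sqrt_sq_add_add_pos hc t
  have hplus : r + t = p * exp u := by
    rw [exp_sub, exp_log hs, exp_log hp]; field_simp
  have hminus : r - t = c / p * exp (-u) := by
    have hprod : (r - t) * (r + t) = c := sqrt_sq_add_sub_mul_sqrt_sq_add_add hc.le t
    rw [hplus] at hprod
    rw [exp_neg, ← hprod]; field_simp
  have hpos : exp u * (1 - u) ≤ 1 := by
    calc exp u * (1 - u) ≤ exp u * exp (-u) := by gcongr; exact one_sub_le_exp_neg u
      _ = 1 := by rw [← exp_add, add_neg_cancel, exp_zero]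
  have hneg : exp (-u) * (1 + u) ≤ 1 := by
    calc exp (-u) * (1 + u) ≤ exp (-u) * exp u := by gcongr; linarith [add_one_le_exp u]
      _ = 1 := by rw [← exp_add, neg_add_cancel, exp_zero]
  calc r - t * u = ((r + t) * (1 - u) + (r - t) * (1 + u)) / 2 := by ring
    _ = (p * (exp u * (1 - u)) + c / p * (exp (-u) * (1 + u))) / 2 := by
        rw [hplus, hminus]; ring
    _ ≤ (p * 1 + c / p * 1) / 2 := by gcongr
    _ = (p + c / p) / 2 := by ring

lemma sqrt_half_sub_div_sq_add (hc : 0 ≤ c) (hp : 0 < p) :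
    √(((p - c / p) / 2) ^ 2 + c) = (p + c / p) / 2 := by
  have hsq : ((p - c / p) / 2) ^ 2 + c = ((p + c / p) / 2) ^ 2 := by
    field_simp; ring
  rw [hsq, Real.sqrt_sq (by positivity)]

end

theorem stmt7_general (a b β : ℝ) (hb : 0 < b) (hab : b < a) :
    let f : ℝ → ℝ := fun t => Real.sqrt (t ^ 2 + a * b)
      - t * (Real.log (Real.sqrt (t ^ 2 + a * b) + t) - Real.log b)
      - (a + b) / 2 + 1 + 2 * β * t
    let tstar : ℝ := (b * Real.exp (2 * β) - a * Real.exp (-2 * β)) / 2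
    (∀ t : ℝ, f t ≤ f tstar) ∧
      f tstar = (b * Real.exp (2 * β) + a * Real.exp (-2 * β)) / 2
        - (a + b) / 2 + 1 := by
  intro f tstar
  have hc : 0 < a * b := mul_pos (hb.trans hab) hb
  set p := b * exp (2 * β)
  have hp : 0 < p := by positivity
  have hcp : a * b / p = a * exp (-2 * β) := by
    rw [neg_mul, exp_neg]; field_simp; ring
  have hlogp : log p = log b + 2 * β := by rw [log_mul hb.ne' (exp_pos _).ne', log_exp]
  have hf : ∀ t, f t = √(t ^ 2 + a * b) - t * (log (√(t ^ 2 + a * b) + t) - log p)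
      - (a + b) / 2 + 1 := by
    intro t; simp only [f, hlogp]; ring
  have hmax : f tstar = (p + a * b / p) / 2 - (a + b) / 2 + 1 := by
    have htstar : tstar = (p - a * b / p) / 2 := by rw [hcp]
    rw [hf, htstar, sqrt_half_sub_div_sq_add hc.le hp]
    ring_nf
  refine ⟨fun t => ?_, by rw [hmax, hcp]⟩
  rw [hmax, hf]
  linarith [sqrt_sq_add_sub_mul_log_le hc hp t]

/-- `f_β` attains its global maximum at
`t* = (b e^{2β} - a e^{-2β})/2`, with maximum value
`(b e^{2β} + a e^{-2β})/2 - (a+b)/2 + 1`. -/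
theorem stmt7 (a b β : ℝ) (hb : 0 < b) (hab : b < a) (hβ : 0 < β) :
    let f : ℝ → ℝ := fun t => Real.sqrt (t ^ 2 + a * b)
      - t * (Real.log (Real.sqrt (t ^ 2 + a * b) + t) - Real.log b)
      - (a + b) / 2 + 1 + 2 * β * t
    let tstar : ℝ := (b * Real.exp (2 * β) - a * Real.exp (-2 * β)) / 2
    (∀ t : ℝ, f t ≤ f tstar) ∧
      f tstar = (b * Real.exp (2 * β) + a * Real.exp (-2 * β)) / 2
        - (a + b) / 2 + 1 :=
  stmt7_general a b β hb hab
end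

section
/- Let a > b > 0 and β > 0. Define f_β(t) = √(t² + ab) - t·(log(√(t² + ab) + t) - log(b)) - (a+b)/2 + 1 + 2βt, g(β) = (b·e^{2β} + a·e^{-2β})/2 - (a+b)/2 + 1, and g̃(β) = g(β) if β < (1/4)·log(a/b), g̃(β) = √(ab) - (a+b)/2 + 1 otherwise. Then f_β(t) ≤ g̃(β) for all t ≤ 0. -/
/-! The substitution `t = (b e^u - a e^{-u}) / 2` is a bijection `ℝ → ℝ` under which
`√(t² + ab) = (b e^u + a e^{-u}) / 2` and `√(t² + ab) + t = b e^u`, so `f_β(t) + (a+b)/2 - 1`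
becomes `φ(u) = (b e^u + a e^{-u}) / 2 + (b e^u - a e^{-u}) (β - u/2)`, whose derivative
`(b e^u + a e^{-u}) (β - u/2)` shows that `φ` increases up to `u = 2β` and decreases after.
The constraint `t ≤ 0` means `u ≤ u₀ = log(a/b) / 2`, and `φ(u₀) = √(ab)`. So the supremum
over `t ≤ 0` is `φ(2β) = g(β) + (a+b)/2 - 1` when `2β < u₀`, and `φ(u₀)` otherwise. -/

open Real

noncomputable def sinhParam (a b u : ℝ) : ℝ := (b * exp u - a * exp (-u)) / 2

noncomputable def phi (a b β u : ℝ) : ℝ :=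
  (b * exp u + a * exp (-u)) / 2 + (b * exp u - a * exp (-u)) * (β - u / 2)

section sinhParam

variable {a b : ℝ}

theorem sqrt_sinhParam_sq_add_mul (ha : 0 ≤ a) (hb : 0 ≤ b) (u : ℝ) :
    √(sinhParam a b u ^ 2 + a * b) = (b * exp u + a * exp (-u)) / 2 := by
  rw [sqrt_eq_iff_eq_sq (by positivity) (by positivity), sinhParam]
  have : exp u * exp (-u) = 1 := by rw [← exp_add, add_neg_cancel, exp_zero]
  linear_combination (-a * b) * this

theorem sqrt_sinhParam_sq_add_mul_add (ha : 0 ≤ a) (hb : 0 ≤ b) (u : ℝ) :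
    √(sinhParam a b u ^ 2 + a * b) + sinhParam a b u = b * exp u := by
  rw [sqrt_sinhParam_sq_add_mul ha hb, sinhParam]
  ring

theorem sinhParam_strictMono (ha : 0 ≤ a) (hb : 0 < b) : StrictMono (sinhParam a b) := by
  intro u v huv
  have h₁ : b * exp u < b * exp v := by gcongr
  have h₂ : a * exp (-v) ≤ a * exp (-u) := by gcongr
  simp only [sinhParam]
  linarith

theorem sinhParam_surjective (ha : 0 < a) (hb : 0 < b) : Function.Surjective (sinhParam a b) := by
  intro t
  set r := √(t ^ 2 + a * b)
  have hr : r ^ 2 = t ^ 2 + a * b := sq_sqrt (by positivity)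
  have hr_gt : |t| < r := by
    rw [← sqrt_sq_eq_abs]
    exact sqrt_lt_sqrt (sq_nonneg t) (by nlinarith)
  have hs : 0 < r + t := by linarith [neg_abs_le t]
  refine ⟨log ((r + t) / b), ?_⟩
  rw [sinhParam, exp_neg, exp_log (div_pos hs hb)]
  field_simp
  nlinarith

theorem sinhParam_half_log_div (ha : 0 < a) (hb : 0 < b) :
    sinhParam a b (log (a / b) / 2) = 0 := by
  have hsq : exp (log (a / b) / 2) ^ 2 = a / b := by
    rw [← exp_nat_mul, Nat.cast_ofNat, mul_div_cancel₀ _ two_ne_zero, exp_log (by positivity)]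
  rw [sinhParam, exp_neg]
  field_simp
  rw [hsq, mul_div_cancel₀ a hb.ne', sub_self, mul_zero]

end sinhParam

section phi

variable (a b β : ℝ)

theorem hasDerivAt_phi (u : ℝ) :
    HasDerivAt (phi a b β) ((b * exp u + a * exp (-u)) * (β - u / 2)) u := by
  have hexp : HasDerivAt (fun u => exp u) (exp u) u := hasDerivAt_exp u
  have hexp_neg : HasDerivAt (fun u => exp (-u)) (-exp (-u)) u := by
    simpa using (hasDerivAt_neg u).exp
  have hlin : HasDerivAt (fun u : ℝ => β - u / 2) (-(1 / 2)) u := by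
    simpa using ((hasDerivAt_id u).div_const 2).const_sub β
  exact ((((hexp.const_mul b).add (hexp_neg.const_mul a)).div_const 2).add
    (((hexp.const_mul b).sub (hexp_neg.const_mul a)).mul hlin)).congr_deriv
      (by simp only [Pi.sub_apply]; ring)

variable {a b}

theorem monotoneOn_phi (ha : 0 ≤ a) (hb : 0 ≤ b) : MonotoneOn (phi a b β) (Set.Iic (2 * β)) :=
  monotoneOn_of_hasDerivWithinAt_nonneg (convex_Iic _)
    (continuous_iff_continuousAt.2 fun u => (hasDerivAt_phi a b β u).continuousAt).continuousOn
    (fun u _ => (hasDerivAt_phi a b β u).hasDerivWithinAt)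
    (fun u hu => by
      have : u < 2 * β := by simpa using hu
      have : 0 ≤ β - u / 2 := by linarith
      positivity)

theorem antitoneOn_phi (ha : 0 ≤ a) (hb : 0 ≤ b) : AntitoneOn (phi a b β) (Set.Ici (2 * β)) :=
  antitoneOn_of_hasDerivWithinAt_nonpos (convex_Ici _)
    (continuous_iff_continuousAt.2 fun u => (hasDerivAt_phi a b β u).continuousAt).continuousOn
    (fun u _ => (hasDerivAt_phi a b β u).hasDerivWithinAt)
    (fun u hu => by
      have : 2 * β < u := by simpa using hu
      exact mul_nonpos_of_nonneg_of_nonpos (by positivity) (by linarith))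

theorem phi_le_phi_two_mul (ha : 0 ≤ a) (hb : 0 ≤ b) (u : ℝ) : phi a b β u ≤ phi a b β (2 * β) := by
  rcases le_total u (2 * β) with h | h
  · exact monotoneOn_phi β ha hb h (Set.mem_Iic.2 le_rfl) h
  · exact antitoneOn_phi β ha hb (Set.mem_Ici.2 le_rfl) h h

theorem phi_two_mul : phi a b β (2 * β) = (b * exp (2 * β) + a * exp (-2 * β)) / 2 := by
  rw [phi, neg_mul]
  ring

theorem phi_eq_sqrt_mul_of_sinhParam_eq_zero (ha : 0 ≤ a) (hb : 0 ≤ b) {u : ℝ}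
    (hu : sinhParam a b u = 0) : phi a b β u = √(a * b) := by
  have hsqrt : √(a * b) = (b * exp u + a * exp (-u)) / 2 := by
    simpa [hu] using sqrt_sinhParam_sq_add_mul ha hb u
  have hdiff : b * exp u - a * exp (-u) = 0 := by rw [sinhParam] at hu; linarith
  rw [phi, hdiff, zero_mul, add_zero, hsqrt]

theorem sqrt_add_mul_log_eq_phi (ha : 0 ≤ a) (hb : 0 < b) (u : ℝ) :
    let t := sinhParam a b u
    √(t ^ 2 + a * b) - t * (log (√(t ^ 2 + a * b) + t) - log b) + 2 * β * t = phi a b β u := by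
  intro t
  rw [sqrt_sinhParam_sq_add_mul_add ha hb.le, log_mul hb.ne' (exp_pos u).ne', log_exp,
    sqrt_sinhParam_sq_add_mul ha hb.le]
  simp only [t, sinhParam, phi]
  ring

end phi

theorem stmt8_general (a b β : ℝ) (hb : 0 < b) (hab : b < a) :
    let f : ℝ → ℝ := fun t => Real.sqrt (t ^ 2 + a * b)
      - t * (Real.log (Real.sqrt (t ^ 2 + a * b) + t) - Real.log b)
      - (a + b) / 2 + 1 + 2 * β * t
    let g : ℝ → ℝ := fun β' => (b * Real.exp (2 * β') + a * Real.exp (-2 * β')) / 2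
      - (a + b) / 2 + 1
    let gt : ℝ → ℝ := fun β' => if β' < (1 / 4) * Real.log (a / b) then g β'
      else Real.sqrt (a * b) - (a + b) / 2 + 1
    ∀ t : ℝ, t ≤ 0 → f t ≤ gt β := by
  intro f g gt t ht
  have ha : 0 < a := hb.trans hab
  obtain ⟨u, rfl⟩ := sinhParam_surjective ha hb t
  have hf : f (sinhParam a b u) = phi a b β u - (a + b) / 2 + 1 := by
    rw [← sqrt_add_mul_log_eq_phi β ha.le hb u]
    ring
  have hu₀ := sinhParam_half_log_div ha hb
  have hu : u ≤ log (a / b) / 2 := (sinhParam_strictMono ha.le hb).le_iff_le.mp (ht.trans hu₀.ge)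
  rw [hf]
  simp only [gt, g]
  split_ifs with hβ
  · linarith [phi_le_phi_two_mul β ha.le hb.le u, phi_two_mul (a := a) (b := b) β]
  · have h₀ : log (a / b) / 2 ≤ 2 * β := by linarith
    linarith [monotoneOn_phi β ha.le hb.le (hu.trans h₀) h₀ hu,
      phi_eq_sqrt_mul_of_sinhParam_eq_zero β ha.le hb.le hu₀]

/-- For `a > b > 0` and `β > 0`, `f_β(t) ≤ g̃(β)` for all `t ≤ 0`. -/
theorem stmt8 (a b β : ℝ) (hb : 0 < b) (hab : b < a) (hβ : 0 < β) :
    let f : ℝ → ℝ := fun t => Real.sqrt (t ^ 2 + a * b)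
      - t * (Real.log (Real.sqrt (t ^ 2 + a * b) + t) - Real.log b)
      - (a + b) / 2 + 1 + 2 * β * t
    let g : ℝ → ℝ := fun β' => (b * Real.exp (2 * β') + a * Real.exp (-2 * β')) / 2
      - (a + b) / 2 + 1
    let gt : ℝ → ℝ := fun β' => if β' < (1 / 4) * Real.log (a / b) then g β'
      else Real.sqrt (a * b) - (a + b) / 2 + 1
    ∀ t : ℝ, t ≤ 0 → f t ≤ gt β :=
  stmt8_general a b β hb hab
end

section
/- Let a, b, t be reals with a > b > 0, and suppose t ∈ [(b-a)/2, 0]. Define f(s) = a·e^{-s} + b·e^{s} - 2st. Then f is convex on ℝ and attains its minimum over [0, ∞) at s* = log(√(t² + ab) + t) - log(b) ≥ 0, with minimum value f(s*) = 2√(t² + ab) - 2t·(log(√(t² + ab) + t) - log(b)). -/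
/-!
With `r = √(t² + ab)` one has `ab = (r - t)(r + t)`, so at `s* = log((r + t)/b)` the two
exponential terms of `f` equal `r + t` and `r - t`. Their difference is `2t`, so `f'(s*) = 0`, and
bounding each exponential below by its tangent at `s*` shows that `s*` minimizes `f` on all of `ℝ`.
Finally `s* ≥ 0` amounts to `b ≤ r + t`, which after squaring is `t ≥ (b - a)/2`.
-/

open Real Set

theorem convexOn_exp_neg : ConvexOn ℝ univ fun s : ℝ => exp (-s) :=
  convexOn_exp.comp_linearMap (-LinearMap.id : ℝ →ₗ[ℝ] ℝ)

theorem convexOn_mul_exp_neg_add_mul_exp_sub {a b : ℝ} (ha : 0 ≤ a) (hb : 0 ≤ b) (t : ℝ) :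
    ConvexOn ℝ univ fun s => a * exp (-s) + b * exp s - 2 * s * t := by
  have hlin : ConcaveOn ℝ univ fun s : ℝ => 2 * s * t :=
    ⟨convex_univ, fun _ _ _ _ _ _ _ _ _ => le_of_eq (by simp only [smul_eq_mul]; ring)⟩
  exact ((convexOn_exp_neg.smul ha).add (convexOn_exp.smul hb)).sub hlin

theorem isMinOn_mul_exp_neg_add_mul_exp_sub {a b t s₀ : ℝ} (ha : 0 ≤ a) (hb : 0 ≤ b)
    (hs₀ : b * exp s₀ - a * exp (-s₀) = 2 * t) :
    IsMinOn (fun s => a * exp (-s) + b * exp s - 2 * s * t) univ s₀ := by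
  refine isMinOn_univ_iff.2 fun s => ?_
  have hneg : a * exp (-s₀) * (s₀ - s + 1) ≤ a * exp (-s) :=
    calc a * exp (-s₀) * (s₀ - s + 1) ≤ a * exp (-s₀) * exp (s₀ - s) := by
          gcongr; exact add_one_le_exp _
      _ = a * exp (-s) := by rw [mul_assoc, ← exp_add]; ring_nf
  have hpos : b * exp s₀ * (s - s₀ + 1) ≤ b * exp s :=
    calc b * exp s₀ * (s - s₀ + 1) ≤ b * exp s₀ * exp (s - s₀) := by
          gcongr; exact add_one_le_exp _
      _ = b * exp s := by rw [mul_assoc, ← exp_add]; ring_nf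
  linear_combination hneg + hpos + (s₀ - s) * hs₀

theorem sqrt_sq_add_mul_add_pos {a b : ℝ} (ha : 0 < a) (hb : 0 < b) (t : ℝ) :
    0 < √(t ^ 2 + a * b) + t := by
  have : |t| < √(t ^ 2 + a * b) :=
    (lt_sqrt (abs_nonneg t)).2 (by rw [sq_abs]; nlinarith [mul_pos ha hb])
  linarith [neg_abs_le t]

theorem le_sqrt_sq_add_mul_add {a b t : ℝ} (hb : 0 < b) (ht : (b - a) / 2 ≤ t) :
    b ≤ √(t ^ 2 + a * b) + t := by
  have : |b - t| ≤ √(t ^ 2 + a * b) := abs_le_sqrt (by nlinarith)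
  linarith [le_abs_self (b - t)]

theorem mul_exp_log_sqrt_sq_add_mul_add_sub_log {a b : ℝ} (ha : 0 < a) (hb : 0 < b) (t : ℝ) :
    let s := log (√(t ^ 2 + a * b) + t) - log b
    b * exp s = √(t ^ 2 + a * b) + t ∧ a * exp (-s) = √(t ^ 2 + a * b) - t := by
  intro s
  have hpos := sqrt_sq_add_mul_add_pos ha hb t
  have hexp : exp s = (√(t ^ 2 + a * b) + t) / b := by
    rw [exp_sub, exp_log hpos, exp_log hb]
  have hsq : √(t ^ 2 + a * b) ^ 2 = t ^ 2 + a * b := sq_sqrt (by positivity)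
  refine ⟨by rw [hexp]; field_simp, ?_⟩
  rw [exp_neg, hexp, inv_div]
  field_simp
  nlinarith

theorem stmt12_general (a b t : ℝ) (hb : 0 < b) (hab : b < a)
    (ht1 : (b - a) / 2 ≤ t) :
    let f : ℝ → ℝ := fun s => a * Real.exp (-s) + b * Real.exp s - 2 * s * t
    let sstar : ℝ := Real.log (Real.sqrt (t ^ 2 + a * b) + t) - Real.log b
    ConvexOn ℝ Set.univ f ∧ 0 ≤ sstar ∧
      (∀ s : ℝ, 0 ≤ s → f sstar ≤ f s) ∧
      f sstar = 2 * Real.sqrt (t ^ 2 + a * b)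
        - 2 * t * (Real.log (Real.sqrt (t ^ 2 + a * b) + t) - Real.log b) := by
  intro f sstar
  have ha : 0 < a := hb.trans hab
  obtain ⟨hexp, hexp_neg⟩ := mul_exp_log_sqrt_sq_add_mul_add_sub_log ha hb t
  have hmin : IsMinOn f univ sstar :=
    isMinOn_mul_exp_neg_add_mul_exp_sub ha.le hb.le (by rw [hexp, hexp_neg]; ring)
  refine ⟨convexOn_mul_exp_neg_add_mul_exp_sub ha.le hb.le t,
    sub_nonneg.2 (log_le_log hb (le_sqrt_sq_add_mul_add hb ht1)),
    fun s _ => isMinOn_univ_iff.1 hmin s, ?_⟩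
  change a * exp (-sstar) + b * exp sstar - 2 * sstar * t = _
  rw [hexp, hexp_neg]
  ring

/-- For `(b-a)/2 ≤ t ≤ 0`, the function
`f(s) = a e^{-s} + b e^{s} - 2st` is convex on `ℝ` and attains its minimum
over `[0, ∞)` at `s* = log(√(t²+ab)+t) - log b ≥ 0`, with
`f(s*) = 2√(t²+ab) - 2t(log(√(t²+ab)+t) - log b)`. -/
theorem stmt12 (a b t : ℝ) (hb : 0 < b) (hab : b < a)
    (ht1 : (b - a) / 2 ≤ t) (ht2 : t ≤ 0) :
    let f : ℝ → ℝ := fun s => a * Real.exp (-s) + b * Real.exp s - 2 * s * t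
    let sstar : ℝ := Real.log (Real.sqrt (t ^ 2 + a * b) + t) - Real.log b
    ConvexOn ℝ Set.univ f ∧ 0 ≤ sstar ∧
      (∀ s : ℝ, 0 ≤ s → f sstar ≤ f s) ∧
      f sstar = 2 * Real.sqrt (t ^ 2 + a * b)
        - 2 * t * (Real.log (Real.sqrt (t ^ 2 + a * b) + t) - Real.log b) :=
  stmt12_general a b t hb hab ht1
end

section
/- Let R_1,…,R_n, S_1,…,S_n be Bernoulli (i.e., {0,1}-valued) random variables such that S_1,…,S_n are mutually independent, and suppose that for all i ∈ [n] and all (r_1,…,r_n) ∈ {0,1}^n, P(S_i = 1) ≤ P(R_i = 1 | R_j = r_j for all j ≠ i). Let R = R_1 + ⋯ + R_n and S = S_1 + ⋯ + S_n. Then P(R ≥ k) ≥ P(S ≥ k) for every k ∈ [n]. -/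
open MeasureTheory ProbabilityTheory
open scoped ENNReal

/-!
Induction on the number of summands. Adding an independent `{0,1}`-valued `Y` with
`P(Y = 1) = p` to `X` gives `P(X + Y ≥ k + 1) = p P(X ≥ k) + (1 - p) P(X ≥ k + 1)`. On the other
side, summing the hypothesis over the configurations of the coordinates other than `a` yields
`P(R_a = 1, R_s = k) ≥ p P(R_s = k)`, hence
`P(R_s + R_a ≥ k + 1) ≥ p P(R_s = k) + P(R_s ≥ k + 1) = p P(R_s ≥ k) + (1 - p) P(R_s ≥ k + 1)`.
So stochastic dominance of `∑_{i ∈ s} S_i` by `∑_{i ∈ s} R_i` passes from `s` to `insert a s`.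
-/

def StochDominated {Ω : Type*} [MeasurableSpace Ω] (μ : Measure Ω) (X Y : Ω → ℕ) : Prop :=
  ∀ k : ℕ, μ {ω | k ≤ X ω} ≤ μ {ω | k ≤ Y ω}

section

variable {Ω : Type*} [MeasurableSpace Ω] {μ : Measure Ω}

theorem mul_measure_preimage_le_of_forall_fiber {β : Type*} {Φ : Ω → β} {t : Finset β}
    {E : Set Ω} {c : ℝ≥0∞} (hE : MeasurableSet E) (hΦ : ∀ y ∈ t, MeasurableSet (Φ ⁻¹' {y}))
    (h : ∀ y ∈ t, c * μ (Φ ⁻¹' {y}) ≤ μ (E ∩ Φ ⁻¹' {y})) :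
    c * μ (Φ ⁻¹' t) ≤ μ (E ∩ Φ ⁻¹' t) := by
  have hE_sum := sum_measure_preimage_singleton (μ := μ.restrict E) t hΦ
  simp only [Measure.restrict_apply' hE, Set.inter_comm _ E] at hE_sum
  rw [← hE_sum, ← sum_measure_preimage_singleton t hΦ, Finset.mul_sum]
  exact Finset.sum_le_sum h

theorem mul_measure_sum_eq_le_of_forall_config {n : ℕ} {R : Fin n → Ω → ℕ}
    (hR : ∀ i, Measurable (R i)) (hR1 : ∀ i ω, R i ω ≤ 1) {a : Fin n} {E : Set Ω} {c : ℝ≥0∞}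
    (hE : MeasurableSet E)
    (h : ∀ r : Fin n → ℕ, (∀ j, r j ≤ 1) →
      c * μ {ω | ∀ j, j ≠ a → R j ω = r j} ≤ μ (E ∩ {ω | ∀ j, j ≠ a → R j ω = r j}))
    {s : Finset (Fin n)} (ha : a ∉ s) (m : ℕ) :
    c * μ {ω | ∑ i ∈ s, R i ω = m} ≤ μ (E ∩ {ω | ∑ i ∈ s, R i ω = m}) := by
  classical
  -- Zeroing the `a`-th coordinate makes the fibres of `Φ` exactly the conditioning events of `h`.
  set Φ : Ω → Fin n → ℕ := fun ω => Function.update (fun j => R j ω) a 0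
  set t : Finset (Fin n → ℕ) :=
    {r ∈ Fintype.piFinset fun _ => ({0, 1} : Finset ℕ) | r a = 0 ∧ ∑ i ∈ s, r i = m}
  have hΦ : Measurable Φ := measurable_pi_iff.2 fun j => by
    by_cases hj : j = a
    · subst hj; simp [Φ]
    · simpa [Φ, Function.update_of_ne hj] using hR j
  have hfiber : ∀ r, r a = 0 → Φ ⁻¹' {r} = {ω | ∀ j, j ≠ a → R j ω = r j} := by
    intro r hr; ext ω; simp [Φ, Function.update_eq_iff, hr]
  have hsum : {ω | ∑ i ∈ s, R i ω = m} = Φ ⁻¹' t := by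
    ext ω
    have hvals : ∀ j, Φ ω j ∈ ({0, 1} : Finset ℕ) := fun j => by
      by_cases hj : j = a
      · simp [Φ, hj]
      · have := hR1 j ω; simp [Φ, Function.update_of_ne hj]; omega
    have hsum_eq : ∑ i ∈ s, Φ ω i = ∑ i ∈ s, R i ω :=
      Finset.sum_congr rfl fun i hi => Function.update_of_ne (ne_of_mem_of_not_mem hi ha) _ _
    rw [Set.mem_preimage, Finset.mem_coe, Finset.mem_filter, hsum_eq]
    exact ⟨fun h => ⟨Fintype.mem_piFinset.2 hvals, by simp [Φ], h⟩, fun h => h.2.2⟩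
  rw [hsum]
  refine mul_measure_preimage_le_of_forall_fiber hE (fun r _ => hΦ (measurableSet_singleton r))
    fun r hr => ?_
  obtain ⟨hr01, hra, -⟩ := Finset.mem_filter.1 hr
  rw [hfiber r hra]
  refine h r fun j => ?_
  have := Fintype.mem_piFinset.1 hr01 j
  simp only [Finset.mem_insert, Finset.mem_singleton] at this
  omega

theorem measure_le_eq_add_measure_succ_le {X : Ω → ℕ} (hX : Measurable X) (k : ℕ) :
    μ {ω | k ≤ X ω} = μ {ω | X ω = k} + μ {ω | k + 1 ≤ X ω} := by
  have hm : MeasurableSet {ω | k + 1 ≤ X ω} := hX measurableSet_Ici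
  rw [← measure_union _ hm]
  · congr 1; ext ω; simp only [Set.mem_ofPred_eq, Set.mem_union]; omega
  · exact Set.disjoint_left.2 fun ω h h' => by simp only [Set.mem_ofPred_eq] at h h'; omega

theorem measure_eq_one_add_measure_eq_zero [IsProbabilityMeasure μ] {Y : Ω → ℕ}
    (hY : Measurable Y) (hY1 : ∀ ω, Y ω ≤ 1) :
    μ {ω | Y ω = 1} + μ {ω | Y ω = 0} = 1 := by
  have hm : MeasurableSet {ω | Y ω = 0} := hY (measurableSet_singleton 0)
  rw [← measure_union _ hm, ← measure_univ (μ := μ)]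
  · congr 1; ext ω; have := hY1 ω
    simp only [Set.mem_union, Set.mem_ofPred_eq, Set.mem_univ, iff_true]; omega
  · exact Set.disjoint_left.2 fun ω h h' => by simp only [Set.mem_ofPred_eq] at h h'; omega

theorem ProbabilityTheory.IndepFun.measure_succ_le_add {X Y : Ω → ℕ} (hXY : IndepFun X Y μ)
    (hX : Measurable X) (hY : Measurable Y) (hY1 : ∀ ω, Y ω ≤ 1) (k : ℕ) :
    μ {ω | k + 1 ≤ X ω + Y ω}
      = μ {ω | Y ω = 1} * μ {ω | k ≤ X ω} + μ {ω | Y ω = 0} * μ {ω | k + 1 ≤ X ω} := by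
  have hsplit : {ω | k + 1 ≤ X ω + Y ω}
      = (X ⁻¹' Set.Ici k ∩ Y ⁻¹' {1}) ∪ (X ⁻¹' Set.Ici (k + 1) ∩ Y ⁻¹' {0}) := by
    ext ω; have := hY1 ω; simp only [Set.mem_ofPred_eq, Set.mem_union, Set.mem_inter_iff,
      Set.mem_preimage, Set.mem_Ici, Set.mem_singleton_iff]; omega
  rw [hsplit, measure_union _ ((hX measurableSet_Ici).inter (hY (measurableSet_singleton 0))),
    hXY.measure_inter_preimage_eq_mul _ _ measurableSet_Ici (measurableSet_singleton 1),
    hXY.measure_inter_preimage_eq_mul _ _ measurableSet_Ici (measurableSet_singleton 0),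
    mul_comm, mul_comm (μ (X ⁻¹' _))]
  · rfl
  · exact Set.disjoint_left.2 fun ω h h' => by
      simp only [Set.mem_inter_iff, Set.mem_preimage, Set.mem_singleton_iff] at h h'; omega

theorem measure_inter_add_measure_succ_le_le {X Y : Ω → ℕ} (hX : Measurable X) (k : ℕ) :
    μ ({ω | Y ω = 1} ∩ {ω | X ω = k}) + μ {ω | k + 1 ≤ X ω} ≤ μ {ω | k + 1 ≤ X ω + Y ω} := by
  have hm : MeasurableSet {ω | k + 1 ≤ X ω} := hX measurableSet_Ici
  rw [← measure_union _ hm]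
  · exact measure_mono fun ω h => by
      rcases h with ⟨h1, h2⟩ | h <;> simp only [Set.mem_ofPred_eq] at * <;> omega
  · exact Set.disjoint_left.2 fun ω h h' => by
      simp only [Set.mem_inter_iff, Set.mem_ofPred_eq] at h h'; omega

theorem StochDominated.add [IsProbabilityMeasure μ] {X Y X' Y' : Ω → ℕ}
    (hdom : StochDominated μ X X') (hXY : IndepFun X Y μ) (hX : Measurable X)
    (hY : Measurable Y) (hY1 : ∀ ω, Y ω ≤ 1) (hX' : Measurable X')
    (hcond : ∀ m, μ {ω | Y ω = 1} * μ {ω | X' ω = m} ≤ μ ({ω | Y' ω = 1} ∩ {ω | X' ω = m})) :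
    StochDominated μ (fun ω => X ω + Y ω) (fun ω => X' ω + Y' ω) := by
  rintro (_ | k)
  · simp
  calc μ {ω | k + 1 ≤ X ω + Y ω}
      = μ {ω | Y ω = 1} * μ {ω | k ≤ X ω} + μ {ω | Y ω = 0} * μ {ω | k + 1 ≤ X ω} :=
        hXY.measure_succ_le_add hX hY hY1 k
    _ ≤ μ {ω | Y ω = 1} * (μ {ω | X' ω = k} + μ {ω | k + 1 ≤ X' ω})
          + μ {ω | Y ω = 0} * μ {ω | k + 1 ≤ X' ω} := by
        rw [← measure_le_eq_add_measure_succ_le hX' k]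
        gcongr _ * ?_ + _ * ?_ <;> apply hdom
    _ = μ {ω | Y ω = 1} * μ {ω | X' ω = k} + μ {ω | k + 1 ≤ X' ω} := by
        rw [mul_add, add_assoc, ← add_mul, measure_eq_one_add_measure_eq_zero hY hY1, one_mul]
    _ ≤ μ ({ω | Y' ω = 1} ∩ {ω | X' ω = k}) + μ {ω | k + 1 ≤ X' ω} := by
        gcongr; exact hcond k
    _ ≤ μ {ω | k + 1 ≤ X' ω + Y' ω} := measure_inter_add_measure_succ_le_le hX' k

end

/-- Let `R_1, …, R_n, S_1, …, S_n` be `{0,1}`-valued random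
variables such that the `S_i` are mutually independent and, for every `i` and
every configuration `r ∈ {0,1}ⁿ` of the other coordinates,
`P(S_i = 1) ≤ P(R_i = 1 | R_j = r_j for all j ≠ i)` (stated multiplicatively so
that it is automatic when the conditioning event is null). Then
`P(R ≥ k) ≥ P(S ≥ k)` for every `k ∈ [n]`, where `R = Σ R_i`, `S = Σ S_i`. -/
theorem stmt15 {Ω : Type*} [MeasurableSpace Ω] (μ : MeasureTheory.Measure Ω)
    [MeasureTheory.IsProbabilityMeasure μ]
    (n : ℕ) (R S : Fin n → Ω → ℕ)
    (hRmeas : ∀ i, Measurable (R i)) (hSmeas : ∀ i, Measurable (S i))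
    (hRval : ∀ i ω, R i ω ≤ 1) (hSval : ∀ i ω, S i ω ≤ 1)
    (hindep : ProbabilityTheory.iIndepFun S μ)
    (hle : ∀ i : Fin n, ∀ r : Fin n → ℕ, (∀ j, r j ≤ 1) →
      μ {ω | S i ω = 1} * μ {ω | ∀ j, j ≠ i → R j ω = r j}
        ≤ μ ({ω | R i ω = 1} ∩ {ω | ∀ j, j ≠ i → R j ω = r j})) :
    ∀ k : ℕ, 1 ≤ k → k ≤ n →
      μ {ω | k ≤ ∑ i, S i ω} ≤ μ {ω | k ≤ ∑ i, R i ω} := by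
  have hdom : ∀ s : Finset (Fin n),
      StochDominated μ (fun ω => ∑ i ∈ s, S i ω) (fun ω => ∑ i ∈ s, R i ω) := by
    intro s
    induction s using Finset.induction_on with
    | empty => simp [StochDominated]
    | insert a s ha ih =>
      simp only [Finset.sum_insert ha, add_comm (S a _), add_comm (R a _)]
      refine ih.add ?_ (Finset.measurable_sum s fun i _ => hSmeas i) (hSmeas a) (hSval a)
        (Finset.measurable_sum s fun i _ => hRmeas i)
        (mul_measure_sum_eq_le_of_forall_config hRmeas hRval
          (hRmeas a (measurableSet_singleton 1)) (hle a) ha)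
      simpa only [Finset.sum_fn] using hindep.indepFun_finsetSum_of_notMem hSmeas ha
  exact fun k _ _ => hdom Finset.univ k
end

section
/- Let R_1,…,R_n, S̄_1,…,S̄_n be Bernoulli random variables such that S̄_1,…,S̄_n are mutually independent, and suppose that for all i ∈ [n] and all (r_1,…,r_n) ∈ {0,1}^n, P(R_i = 1 | R_j = r_j for all j ≠ i) ≤ P(S̄_i = 1). Let R = Σ R_i and S̄ = Σ S̄_i. Then P(R ≤ k) ≥ P(S̄ ≤ k) for every k ∈ [n]. -/
/-!
Compare the upper tails `μ {k ≤ ∑_{j ∈ I} R_j}` and `μ {k ≤ ∑_{j ∈ I} S̄_j}` by induction on `I`.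
Adding a coordinate `i ∉ I` to a {0,1}-valued sum `T` gives
`μ {k + 1 ≤ R_i + T} = μ {k + 1 ≤ T} + μ {R_i = 1, T = k}`. Since `{T = t}` is a union of
configurations of the coordinates other than `i`, the hypothesis yields
`μ {R_i = 1, T = k} ≤ q_i μ {T = k}` with `q_i = μ {S̄_i = 1}`, while independence gives equality
on the `S̄` side. So the new tail is at most the convex combination
`(1 - q_i) μ {k + 1 ≤ T} + q_i μ {k ≤ T}`, and both terms are controlled by induction.
-/

open MeasureTheory ProbabilityTheory
open scoped ENNReal

lemma ENNReal.add_mul_le_add_mul_of_le_one {p x x' a b : ℝ≥0∞} (hp : p ≤ 1) (hx : x ≤ x')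
    (hxa : x + a ≤ x' + b) : x + p * a ≤ x' + p * b :=
  calc x + p * a = (1 - p) * x + p * (x + a) := by
        rw [mul_add, ← add_assoc, ← add_mul, tsub_add_cancel_of_le hp, one_mul]
    _ ≤ (1 - p) * x' + p * (x' + b) := by gcongr
    _ = x' + p * b := by
        rw [mul_add, ← add_assoc, ← add_mul, tsub_add_cancel_of_le hp, one_mul]

section

variable {Ω : Type*} [MeasurableSpace Ω] {μ : Measure Ω}

lemma measure_inter_preimage_le_mul_of_forall_fiber {α : Type*} [MeasurableSpace α] [Countable α]
    [MeasurableSingletonClass α] {X : Ω → α} (hX : Measurable X) {A : Set Ω} {p : ℝ≥0∞}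
    (hfiber : ∀ ω, μ (A ∩ X ⁻¹' {X ω}) ≤ p * μ (X ⁻¹' {X ω})) (s : Set α) :
    μ (A ∩ X ⁻¹' s) ≤ p * μ (X ⁻¹' s) := by
  have hmeas : ∀ a ∈ s, MeasurableSet (X ⁻¹' {a}) := fun a _ => hX (measurableSet_singleton a)
  have hfiber' : ∀ a, μ (A ∩ X ⁻¹' {a}) ≤ p * μ (X ⁻¹' {a}) := by
    intro a
    by_cases ha : a ∈ Set.range X
    · obtain ⟨ω, rfl⟩ := ha
      exact hfiber ω
    · simp [Set.preimage_singleton_eq_empty.mpr ha]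
  rw [Set.inter_comm, ← Measure.restrict_apply (hX s.to_countable.measurableSet),
    ← tsum_measure_preimage_singleton s.to_countable hmeas,
    ← tsum_measure_preimage_singleton s.to_countable hmeas, ← ENNReal.tsum_mul_left]
  refine ENNReal.tsum_le_tsum fun a => ?_
  rw [Measure.restrict_apply (hmeas a a.2), Set.inter_comm]
  exact hfiber' a

lemma measure_inter_sum_eq_le_mul {ι : Type*} [Finite ι] {R : ι → Ω → ℕ}
    (hR : ∀ i, Measurable (R i)) (hR1 : ∀ i ω, R i ω ≤ 1) {i : ι} {p : ℝ≥0∞}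
    (hcond : ∀ r : ι → ℕ, (∀ j, r j ≤ 1) →
      μ ({ω | R i ω = 1} ∩ {ω | ∀ j, j ≠ i → R j ω = r j})
        ≤ p * μ {ω | ∀ j, j ≠ i → R j ω = r j})
    {I : Finset ι} (hi : i ∉ I) (t : ℕ) :
    μ ({ω | R i ω = 1} ∩ {ω | ∑ j ∈ I, R j ω = t}) ≤ p * μ {ω | ∑ j ∈ I, R j ω = t} := by
  set X : Ω → ({j // j ≠ i} → ℕ) := fun ω j => R j ω
  set B := {ω | ∑ j ∈ I, R j ω = t}
  have hX : Measurable X := measurable_pi_lambda _ fun j => hR j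
  have hfiber : ∀ ω, {ω' | ∀ j, j ≠ i → R j ω' = R j ω} = X ⁻¹' {X ω} := by
    intro ω
    ext ω'
    simp [X, funext_iff]
  have hB : X ⁻¹' (X '' B) = B := by
    refine (Set.subset_preimage_image X B).antisymm' ?_
    rintro ω ⟨ω', hω', hXω⟩
    refine Eq.trans (Finset.sum_congr rfl fun j hj => ?_) hω'
    exact (congrFun hXω ⟨j, ne_of_mem_of_not_mem hj hi⟩).symm
  rw [← hB]
  refine measure_inter_preimage_le_mul_of_forall_fiber hX (fun ω => ?_) _
  rw [← hfiber]
  exact hcond _ fun j => hR1 j ω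

lemma ProbabilityTheory.iIndepFun.measure_inter_sum_eq {ι : Type*} {S : ι → Ω → ℕ}
    (hindep : iIndepFun S μ) (hS : ∀ i, Measurable (S i)) {i : ι} {I : Finset ι} (hi : i ∉ I)
    (a t : ℕ) :
    μ ({ω | S i ω = a} ∩ {ω | ∑ j ∈ I, S j ω = t})
      = μ {ω | S i ω = a} * μ {ω | ∑ j ∈ I, S j ω = t} := by
  classical
  have h := (hindep.indepFun_finsetSum_of_notMem hS hi).symm
  simpa [Set.preimage, Finset.sum_apply] using
    h.measure_inter_preimage_eq_mul {a} {t} (measurableSet_singleton _) (measurableSet_singleton _)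

lemma measure_succ_le_add {f Z : Ω → ℕ} (hf : Measurable f) (hZ : Measurable Z)
    (hZ1 : ∀ ω, Z ω ≤ 1) (k : ℕ) :
    μ {ω | k + 1 ≤ Z ω + f ω} = μ {ω | k + 1 ≤ f ω} + μ ({ω | Z ω = 1} ∩ {ω | f ω = k}) := by
  have hsplit : {ω | k + 1 ≤ Z ω + f ω} = {ω | k + 1 ≤ f ω} ∪ ({ω | Z ω = 1} ∩ {ω | f ω = k}) := by
    ext ω
    have := hZ1 ω
    simp only [Set.mem_ofPred_eq, Set.mem_union, Set.mem_inter_iff]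
    omega
  have hmeas : MeasurableSet ({ω | Z ω = 1} ∩ {ω | f ω = k}) :=
    (hZ (measurableSet_singleton 1)).inter (hf (measurableSet_singleton k))
  rw [hsplit]
  refine measure_union (Set.disjoint_left.mpr fun ω h1 h2 => ?_) hmeas
  simp only [Set.mem_ofPred_eq, Set.mem_inter_iff] at h1 h2
  omega

lemma measure_succ_le_add_measure_eq {f : Ω → ℕ} (hf : Measurable f) (k : ℕ) :
    μ {ω | k + 1 ≤ f ω} + μ {ω | f ω = k} = μ {ω | k ≤ f ω} := by
  have hsplit : {ω | k ≤ f ω} = {ω | k + 1 ≤ f ω} ∪ {ω | f ω = k} := by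
    ext ω
    simp only [Set.mem_ofPred_eq, Set.mem_union]
    omega
  have hmeas : MeasurableSet {ω | f ω = k} := hf (measurableSet_singleton k)
  rw [hsplit]
  refine (measure_union (Set.disjoint_left.mpr fun ω h1 h2 => ?_) hmeas).symm
  simp only [Set.mem_ofPred_eq] at h1 h2
  omega

lemma prob_le_eq_one_sub_prob_succ_le [IsProbabilityMeasure μ] {f : Ω → ℕ} (hf : Measurable f)
    (k : ℕ) : μ {ω | f ω ≤ k} = 1 - μ {ω | k + 1 ≤ f ω} := by
  have hmeas : MeasurableSet {ω | k + 1 ≤ f ω} := hf measurableSet_Ici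
  rw [← prob_compl_eq_one_sub hmeas]
  congr 1
  ext ω
  simp only [Set.mem_ofPred_eq, Set.mem_compl_iff]
  omega

theorem measure_le_sum_le_measure_le_sum {ι : Type*} {R S : ι → Ω → ℕ}
    (hR : ∀ i, Measurable (R i)) (hS : ∀ i, Measurable (S i))
    (hR1 : ∀ i ω, R i ω ≤ 1) (hS1 : ∀ i ω, S i ω ≤ 1) {q : ι → ℝ≥0∞} (hq : ∀ i, q i ≤ 1)
    (hRstep : ∀ i (I : Finset ι), i ∉ I → ∀ t,
      μ ({ω | R i ω = 1} ∩ {ω | ∑ j ∈ I, R j ω = t}) ≤ q i * μ {ω | ∑ j ∈ I, R j ω = t})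
    (hSstep : ∀ i (I : Finset ι), i ∉ I → ∀ t,
      q i * μ {ω | ∑ j ∈ I, S j ω = t} ≤ μ ({ω | S i ω = 1} ∩ {ω | ∑ j ∈ I, S j ω = t}))
    (I : Finset ι) (k : ℕ) :
    μ {ω | k ≤ ∑ j ∈ I, R j ω} ≤ μ {ω | k ≤ ∑ j ∈ I, S j ω} := by
  classical
  induction I using Finset.induction_on generalizing k with
  | empty => simp
  | @insert i I hi ih =>
    cases k with
    | zero => simp
    | succ k =>
      have hRI : Measurable fun ω => ∑ j ∈ I, R j ω := Finset.measurable_sum I fun j _ => hR j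
      have hSI : Measurable fun ω => ∑ j ∈ I, S j ω := Finset.measurable_sum I fun j _ => hS j
      simp only [Finset.sum_insert hi]
      rw [measure_succ_le_add hRI (hR i) (hR1 i), measure_succ_le_add hSI (hS i) (hS1 i)]
      calc _ ≤ μ {ω | k + 1 ≤ ∑ j ∈ I, R j ω} + q i * μ {ω | ∑ j ∈ I, R j ω = k} := by
            gcongr
            exact hRstep i I hi k
        _ ≤ μ {ω | k + 1 ≤ ∑ j ∈ I, S j ω} + q i * μ {ω | ∑ j ∈ I, S j ω = k} := by
            refine ENNReal.add_mul_le_add_mul_of_le_one (hq i) (ih (k + 1)) ?_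
            rw [measure_succ_le_add_measure_eq hRI, measure_succ_le_add_measure_eq hSI]
            exact ih k
        _ ≤ _ := by
            gcongr
            exact hSstep i I hi k

end

/-- Let `R_1, …, R_n, S̄_1, …, S̄_n` be `{0,1}`-valued random
variables such that the `S̄_i` are mutually independent and, for every `i` and
every configuration `r ∈ {0,1}ⁿ` of the other coordinates,
`P(R_i = 1 | R_j = r_j for all j ≠ i) ≤ P(S̄_i = 1)` (stated multiplicatively so
that it is automatic when the conditioning event is null). Then
`P(R ≤ k) ≥ P(S̄ ≤ k)` for every `k ∈ [n]`, where `R = Σ R_i`, `S̄ = Σ S̄_i`. -/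
theorem stmt16 {Ω : Type*} [MeasurableSpace Ω] (μ : MeasureTheory.Measure Ω)
    [MeasureTheory.IsProbabilityMeasure μ]
    (n : ℕ) (R Sbar : Fin n → Ω → ℕ)
    (hRmeas : ∀ i, Measurable (R i)) (hSmeas : ∀ i, Measurable (Sbar i))
    (hRval : ∀ i ω, R i ω ≤ 1) (hSval : ∀ i ω, Sbar i ω ≤ 1)
    (hindep : ProbabilityTheory.iIndepFun Sbar μ)
    (hge : ∀ i : Fin n, ∀ r : Fin n → ℕ, (∀ j, r j ≤ 1) →
      μ ({ω | R i ω = 1} ∩ {ω | ∀ j, j ≠ i → R j ω = r j})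
        ≤ μ {ω | Sbar i ω = 1} * μ {ω | ∀ j, j ≠ i → R j ω = r j}) :
    ∀ k : ℕ, 1 ≤ k → k ≤ n →
      μ {ω | (∑ i, Sbar i ω) ≤ k} ≤ μ {ω | (∑ i, R i ω) ≤ k} := by
  intro k _ _
  have htail := measure_le_sum_le_measure_le_sum hRmeas hSmeas hRval hSval
    (fun _ => prob_le_one)
    (fun i _ hi t => measure_inter_sum_eq_le_mul hRmeas hRval (hge i) hi t)
    (fun i _ hi t => (hindep.measure_inter_sum_eq hSmeas hi 1 t).ge) Finset.univ (k + 1)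
  rw [prob_le_eq_one_sub_prob_succ_le (Finset.measurable_sum _ fun i _ => hSmeas i),
    prob_le_eq_one_sub_prob_succ_le (Finset.measurable_sum _ fun i _ => hRmeas i)]
  exact tsub_le_tsub_left htail 1
end
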